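/- Invertibility of the model map φ. The map φ : U_0 → ℂⁿ defined by φ(x) = (1/x^M, g_{𝓜_2}(x),…,g_{𝓜_n}(x)) is injective with holomorphic inverse on its image, and its inverse is given coordinatewise by φ^{−1}_i(z,w) = z^{a_i}·w^{𝓝_i}, where w^{𝓝_i} = ∏_{j=2}^{n} w_j^{𝓝_{i,j}} and z^{a_i} is defined by the branch of the logarithm determined by |arg z| < θ; in particular the exponent of z in φ^{−1}_i equals a_i. -/

import Mathlib

/-!
Write `z = x^m`, so that `x^M = z^d` and `|d · arg z| < θ < π` on `U_0`; hence
`(1/x^M)^{a_i} = z^{-d a_i}` for the principal branch. Put `g_j = x^{𝓜_j} z^{λ_j}` for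
every row `j`; then `g_0 = z · z^{-1} = 1` because `⟨a, M⟩ = -1`, and `𝓝 𝓜 = 1` makes the exponents
recombine: `∏_j g_j^{𝓝_{ij}} = x_i · z^{d a_i}`, the `z`-exponent being `d (𝓝 𝓜 a)_i`.
A coordinate of `x ∈ U_0` can vanish only if `m_k = 0`, i.e. in the identity block of `𝓜`,
where no negative power of it occurs. The explicit left inverse gives injectivity, and it is
holomorphic because `1/x^M` lies in the slit plane.
-/

noncomputable section

open Complex Filter Topology Set Function

/-- The monomial `x^M = x_1^{M_1} ⋯ x_n^{M_n}`. -/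
def monom {n : ℕ} (M : Fin n → ℕ) (x : Fin n → ℂ) : ℂ := ∏ i, x i ^ M i

/-- The sector `C(ε,θ) = {z ∈ ℂ* : |z| < ε, |arg z| < θ}`. -/
def sectC (ε θ : ℝ) : Set ℂ := {z | z ≠ 0 ∧ ‖z‖ < ε ∧ |Complex.arg z| < θ}

/-- The connected component `U_0` of `U(ε,θ)` on which `arg(x^m)` is close to `0`. -/
def U0set {n : ℕ} (M m : Fin n → ℕ) (d : ℕ) (γ ε θ : ℝ) : Set (Fin n → ℂ) :=
  {x | monom M x ∈ sectC ε θ ∧ (∀ i, ‖x i‖ < ‖monom m x‖ ^ γ) ∧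
    |Complex.arg (monom m x)| < θ / (d : ℝ)}

/-- The first integral `g_I(x) = x^I · (x^m)^λ` of the model vector field. -/
def gfun {n : ℕ} (m I : Fin n → ℕ) (lam : ℂ) (x : Fin n → ℂ) : ℂ :=
  monom I x * monom m x ^ lam

theorem prod_zpow_eq_zpow_sum₀ {ι K : Type*} [CommGroupWithZero K] {a : K} (ha : a ≠ 0)
    (s : Finset ι) (f : ι → ℤ) : ∏ i ∈ s, a ^ f i = a ^ ∑ i ∈ s, f i := by
  induction s using Finset.cons_induction with
  | empty => simp
  | cons j s hj ih => rw [Finset.prod_cons, Finset.sum_cons, ih, zpow_add₀ ha]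

section MonomialInversion

variable {ι : Type*} [Fintype ι] [DecidableEq ι] {A B : Matrix ι ι ℤ}

theorem apply_eq_ite_of_mul_eq_one (hBA : B * A = 1) {k : ι}
    (hk : ∀ j, A j k = if j = k then 1 else 0) (i : ι) : B i k = if i = k then 1 else 0 := by
  simpa [Matrix.mul_apply, hk, Matrix.one_apply] using congrFun (congrFun hBA i) k

theorem sum_mul_sum_of_mul_eq_one {R : Type*} [CommRing R] (hBA : B * A = 1) (a : ι → R)
    (i : ι) : ∑ j, (B i j : R) * ∑ k, a k * (A j k : R) = a i := by
  have hcast : ∀ k, ∑ j, (B i j : R) * A j k = if i = k then 1 else 0 := fun k => by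
    simpa [Matrix.mul_apply, Matrix.one_apply, apply_ite] using
      congrArg (fun C : Matrix ι ι ℤ => (C i k : R)) hBA
  calc ∑ j, (B i j : R) * ∑ k, a k * (A j k : R) = ∑ k, a k * ∑ j, (B i j : R) * A j k := by
        simp only [Finset.mul_sum]
        rw [Finset.sum_comm]
        exact Finset.sum_congr rfl fun k _ => Finset.sum_congr rfl fun j _ => by ring
    _ = a i := by simp [hcast]

/-- Since `0 ^ 1 * 0 ^ (-1) ≠ 0 ^ 0`, coordinates of `x` may vanish only where `A` acts as the
identity. -/
theorem prod_monomial_zpow_of_mul_eq_one {K : Type*} [CommGroupWithZero K] (hBA : B * A = 1)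
    {x : ι → K} (hx : ∀ k, x k = 0 → ∀ j, A j k = if j = k then 1 else 0) (i : ι) :
    ∏ j, (∏ k, x k ^ A j k) ^ B i j = x i := by
  have hcol : ∀ k, ∏ j, x k ^ (A j k * B i j) = x k ^ (B * A) i k := fun k => by
    by_cases hxk : x k = 0
    · simp [Matrix.mul_apply, hx k hxk]
    · rw [prod_zpow_eq_zpow_sum₀ hxk, Matrix.mul_apply]
      simp only [mul_comm]
  calc ∏ j, (∏ k, x k ^ A j k) ^ B i j = ∏ k, ∏ j, x k ^ (A j k * B i j) := by
        simp only [← Finset.prod_zpow, zpow_mul]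
        exact Finset.prod_comm
    _ = x i := by simp [hcol, hBA, Matrix.one_apply]

end MonomialInversion

theorem inv_mem_slitPlane {w : ℂ} (hw : w ∈ slitPlane) : w⁻¹ ∈ slitPlane := by
  rw [mem_slitPlane_iff_arg] at hw ⊢
  refine ⟨?_, inv_ne_zero hw.2⟩
  rw [arg_inv, if_neg hw.1]
  linarith [neg_pi_lt_arg w, Real.pi_pos]

theorem inv_pow_cpow_mul_cpow_nat_mul {z : ℂ} (hz : z ≠ 0) {d : ℕ}
    (hpi : (z ^ d).arg ≠ Real.pi) (hlt : -Real.pi < d * z.arg) (hle : d * z.arg ≤ Real.pi) (c : ℂ) :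
    (z ^ d)⁻¹ ^ c * z ^ (d * c) = 1 := by
  rw [inv_cpow _ _ hpi, cpow_nat_mul' hlt hle, inv_mul_cancel₀]
  exact cpow_ne_zero_iff.2 (Or.inl (pow_ne_zero d hz))

theorem differentiableAt_cpow_mul_prod_zpow {ι : Type*} [Fintype ι] (i₀ : ι) (c : ℂ)
    (s : Finset ι) (e : ι → ℤ) {y : ι → ℂ} (h₀ : y i₀ ∈ slitPlane)
    (hs : ∀ j ∈ s, y j ≠ 0 ∨ 0 ≤ e j) :
    DifferentiableAt ℂ (fun y : ι → ℂ => y i₀ ^ c * ∏ j ∈ s, y j ^ e j) y := by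
  classical
  exact ((differentiableAt_apply i₀ y).cpow_const h₀).mul (HasFDerivAt.finsetProd fun j hj =>
    ((differentiableAt_apply j y).zpow (hs j hj)).hasFDerivAt).differentiableAt

section ModelMap

variable {n : ℕ} {M m : Fin n → ℕ} {d : ℕ} {x : Fin n → ℂ}

theorem monom_eq_pow (hm : ∀ i, M i = d * m i) (x : Fin n → ℂ) : monom M x = monom m x ^ d := by
  simp only [monom, ← Finset.prod_pow, ← pow_mul, hm, mul_comm]

theorem ne_zero_of_monom_ne_zero (h : monom m x ≠ 0) {k : Fin n} (hk : m k ≠ 0) : x k ≠ 0 :=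
  fun hxk => h (Finset.prod_eq_zero (Finset.mem_univ k) (by simp [hxk, hk]))

theorem monom_toNat_eq_prod_zpow {e : Fin n → ℤ} (he : ∀ k, 0 ≤ e k) (x : Fin n → ℂ) :
    monom (fun k => (e k).toNat) x = ∏ k, x k ^ e k :=
  Finset.prod_congr rfl fun k _ => by rw [← zpow_natCast, Int.toNat_of_nonneg (he k)]

/-- `g_{A_j}(x)`, the `j`-th coordinate of the model map for `j ≠ 0` when `A = 𝓜`. -/
def rowIntegral (m : Fin n → ℕ) (d : ℕ) (a : Fin n → ℂ) (A : Matrix (Fin n) (Fin n) ℤ)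
    (x : Fin n → ℂ) (j : Fin n) : ℂ :=
  gfun m (fun k => (A j k).toNat) ((d : ℂ) * ∑ k, a k * (A j k : ℂ)) x

variable {a : Fin n → ℂ} {A B : Matrix (Fin n) (Fin n) ℤ}

theorem rowIntegral_eq_one {j : Fin n} (hrow : ∀ k, A j k = m k)
    (hnorm : (d : ℂ) * ∑ k, a k * (m k : ℂ) = -1) (hz : monom m x ≠ 0) :
    rowIntegral m d a A x j = 1 := by
  have hexp : (fun k => (A j k).toNat) = m := funext fun k => by simp [hrow]
  rw [rowIntegral, gfun, hexp]
  simp only [hrow, Int.cast_natCast, hnorm, cpow_neg_one, mul_inv_cancel₀ hz]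

theorem rowIntegral_eq (hA : ∀ j k, 0 ≤ A j k) (j : Fin n) :
    rowIntegral m d a A x j =
      (∏ k, x k ^ A j k) * monom m x ^ ((d : ℂ) * ∑ k, a k * (A j k : ℂ)) := by
  rw [rowIntegral, gfun, monom_toNat_eq_prod_zpow (hA j)]

theorem prod_rowIntegral_zpow (hBA : B * A = 1) (hA : ∀ j k, 0 ≤ A j k) (hz : monom m x ≠ 0)
    (hx : ∀ k, x k = 0 → ∀ j, A j k = if j = k then 1 else 0) (i : Fin n) :
    ∏ j, rowIntegral m d a A x j ^ B i j = x i * monom m x ^ ((d : ℂ) * a i) := by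
  have hexp : ∑ j, (B i j : ℂ) * ((d : ℂ) * ∑ k, a k * (A j k : ℂ)) = d * a i := by
    simp only [mul_left_comm _ (d : ℂ), ← Finset.mul_sum, sum_mul_sum_of_mul_eq_one hBA]
  simp only [rowIntegral_eq hA, mul_zpow, Finset.prod_mul_distrib,
    prod_monomial_zpow_of_mul_eq_one hBA hx]
  rw [← hexp, Finset.prod_congr rfl fun j _ => (cpow_int_mul _ (B i j) _).symm]
  simp only [cpow_def_of_ne_zero hz, ← Complex.exp_sum, ← Finset.mul_sum]

theorem rowIntegral_ne_zero_or_nonneg (hBA : B * A = 1) (hA : ∀ j k, 0 ≤ A j k)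
    (hz : monom m x ≠ 0) (hx : ∀ k, x k = 0 → ∀ j, A j k = if j = k then 1 else 0)
    (i j : Fin n) : rowIntegral m d a A x j ≠ 0 ∨ 0 ≤ B i j := by
  by_cases hxj : ∀ k, A j k ≠ 0 → x k ≠ 0
  · left
    rw [rowIntegral_eq hA]
    refine mul_ne_zero (Finset.prod_ne_zero_iff.2 fun k _ => ?_)
      (cpow_ne_zero_iff.2 (Or.inl hz))
    by_cases hAjk : A j k = 0
    · simp [hAjk]
    · exact zpow_ne_zero _ (hxj k hAjk)
  · right
    push Not at hxj
    obtain ⟨k, hAjk, hxk⟩ := hxj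
    obtain rfl : j = k := by_contra fun h => hAjk (by rw [hx k hxk j, if_neg h])
    rw [apply_eq_ite_of_mul_eq_one hBA (hx j hxk) i]
    split_ifs <;> norm_num

variable {γ ε θ : ℝ}

theorem pos_of_mem_U0set (hx : x ∈ U0set M m d γ ε θ) : 0 < d := by
  refine Nat.pos_of_ne_zero fun hd => ?_
  have harg := hx.2.2
  simp only [hd, CharP.cast_eq_zero, div_zero] at harg
  exact (abs_nonneg _).not_gt harg

theorem abs_natCast_mul_arg_lt_of_mem_U0set (hx : x ∈ U0set M m d γ ε θ) :
    |(d : ℝ) * (monom m x).arg| < θ := by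
  have hd : (0 : ℝ) < d := Nat.cast_pos.2 (pos_of_mem_U0set hx)
  rw [abs_mul, Nat.abs_cast, ← lt_div_iff₀' hd]
  exact hx.2.2

theorem monom_ne_zero_of_mem_U0set (hm : ∀ i, M i = d * m i) (hx : x ∈ U0set M m d γ ε θ) :
    monom m x ≠ 0 := fun h =>
  hx.1.1 (by rw [monom_eq_pow hm, h, zero_pow (pos_of_mem_U0set hx).ne'])

theorem monom_mem_slitPlane_of_mem_U0set (hθ : θ < Real.pi) (hx : x ∈ U0set M m d γ ε θ) :
    monom M x ∈ slitPlane := by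
  refine mem_slitPlane_iff_arg.2 ⟨fun h => ?_, hx.1.1⟩
  have harg := hx.1.2.2
  rw [h, abs_of_pos Real.pi_pos] at harg
  exact hθ.not_gt harg

theorem inv_monom_cpow_mul_prod_rowIntegral_zpow (hθ : θ < Real.pi) (hm : ∀ i, M i = d * m i)
    (hBA : B * A = 1) (hA : ∀ j k, 0 ≤ A j k) (hx : x ∈ U0set M m d γ ε θ)
    (hzero : ∀ k, x k = 0 → ∀ j, A j k = if j = k then 1 else 0) (i : Fin n) :
    (monom M x)⁻¹ ^ a i * ∏ j, rowIntegral m d a A x j ^ B i j = x i := by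
  have hz := monom_ne_zero_of_mem_U0set hm hx
  have harg := abs_lt.1 (abs_natCast_mul_arg_lt_of_mem_U0set hx)
  have hpi := slitPlane_arg_ne_pi (monom_mem_slitPlane_of_mem_U0set hθ hx)
  rw [monom_eq_pow hm] at hpi ⊢
  rw [prod_rowIntegral_zpow hBA hA hz hzero, mul_left_comm,
    inv_pow_cpow_mul_cpow_nat_mul hz hpi (by linarith) (by linarith), mul_one]

end ModelMap

theorem model_map_invertible_general
    {n : ℕ} [NeZero n]
    (M : Fin n → ℕ)
    (a : Fin n → ℂ)
    (hnorm : ∑ i, a i * (M i : ℂ) = -1)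
    (d : ℕ)
    (m : Fin n → ℕ) (hm : ∀ i, M i = d * m i)
    (mbar : ℕ)
    (horder : ∀ i : Fin n, m i = 0 ↔ n - mbar ≤ (i : ℕ))
    (γ : ℝ)
    (𝓜mat Nmat : Matrix (Fin n) (Fin n) ℤ)
    (hnn : ∀ i j, 0 ≤ 𝓜mat i j)
    (hrow0 : ∀ j, 𝓜mat 0 j = (m j : ℤ))
    (hblock : ∀ i j : Fin n, (n - mbar ≤ (i : ℕ) ∨ n - mbar ≤ (j : ℕ)) →
      𝓜mat i j = if i = j then 1 else 0)
    (hNM : Nmat * 𝓜mat = 1)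
    (φ : (Fin n → ℂ) → (Fin n → ℂ))
    (hφ : ∀ x, ∀ i : Fin n, φ x i = if i = 0 then (monom M x)⁻¹
      else gfun m (fun j => (𝓜mat i j).toNat) ((d : ℂ) * ∑ j, a j * (𝓜mat i j : ℂ)) x) :
    ∀ θ, 0 < θ → θ < Real.pi / 2 →
      ∃ ε₀ > 0, ∀ ε, 0 < ε → ε ≤ ε₀ →
        InjOn φ (U0set M m d γ ε θ) ∧
        (∀ x ∈ U0set M m d γ ε θ, ∀ i : Fin n,
          x i = φ x 0 ^ a i *
            ∏ j ∈ Finset.univ.erase (0 : Fin n), φ x j ^ Nmat i j) ∧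
        DifferentiableOn ℂ
          (fun y : Fin n → ℂ => fun i : Fin n =>
            y 0 ^ a i * ∏ j ∈ Finset.univ.erase (0 : Fin n), y j ^ Nmat i j)
          (φ '' U0set M m d γ ε θ) := by
  intro θ _ hθ
  refine ⟨1, one_pos, fun ε _ _ => ?_⟩
  set U := U0set M m d γ ε θ
  have hθπ : θ < Real.pi := by linarith [Real.pi_pos]
  have hφ0 (x) : φ x 0 = (monom M x)⁻¹ := by simp [hφ]
  have hφj (x) : ∀ j ∈ Finset.univ.erase 0, φ x j = rowIntegral m d a 𝓜mat x j := fun j hj => by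
    rw [hφ, if_neg (Finset.ne_of_mem_erase hj), rowIntegral]
  have hnorm_m : (d : ℂ) * ∑ k, a k * (m k : ℂ) = -1 := by
    rw [← hnorm, Finset.mul_sum]
    exact Finset.sum_congr rfl fun k _ => by rw [hm, Nat.cast_mul]; ring
  have hzero : ∀ x ∈ U, ∀ k, x k = 0 → ∀ j, 𝓜mat j k = if j = k then 1 else 0 :=
    fun x hx k hxk j => hblock j k <| Or.inr <| (horder k).1 <| not_not.1 fun hk =>
      ne_zero_of_monom_ne_zero (monom_ne_zero_of_mem_U0set hm hx) hk hxk
  have hinv : ∀ x ∈ U, ∀ i, x i = φ x 0 ^ a i *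
      ∏ j ∈ Finset.univ.erase 0, φ x j ^ Nmat i j := fun x hx i => by
    rw [hφ0, Finset.prod_congr rfl fun j hj => by rw [hφj x j hj],
      Finset.prod_erase _ (by rw [rowIntegral_eq_one hrow0 hnorm_m
        (monom_ne_zero_of_mem_U0set hm hx), one_zpow]),
      inv_monom_cpow_mul_prod_rowIntegral_zpow hθπ hm hNM hnn hx (hzero x hx)]
  refine ⟨fun x hx y hy hxy => funext fun i => by rw [hinv x hx i, hinv y hy i, hxy], hinv, ?_⟩
  rintro _ ⟨x, hx, rfl⟩
  refine (differentiableAt_pi.2 fun i => differentiableAt_cpow_mul_prod_zpow 0 (a i) _ (Nmat i)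
    ?_ fun j hj => ?_).differentiableWithinAt
  · rw [hφ0]
    exact inv_mem_slitPlane (monom_mem_slitPlane_of_mem_U0set hθπ hx)
  · rw [hφj x j hj]
    exact rowIntegral_ne_zero_or_nonneg hNM hnn (monom_ne_zero_of_mem_U0set hm hx)
      (hzero x hx) i j

theorem model_map_invertible
    {n : ℕ} [NeZero n]
    (M : Fin n → ℕ) (hM : M ≠ 0)
    (a : Fin n → ℂ) (ha : ∀ i, a i ≠ 0)
    (hnorm : ∑ i, a i * (M i : ℂ) = -1)
    (d : ℕ) (hd : d = Finset.univ.gcd M)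
    (m : Fin n → ℕ) (hm : ∀ i, M i = d * m i)
    (mbar : ℕ) (hmbar : mbar = (Finset.univ.filter (fun i => m i = 0)).card)
    (horder : ∀ i : Fin n, m i = 0 ↔ n - mbar ≤ (i : ℕ))
    (hre : ∀ i, (a i).re < 0)
    (γ : ℝ) (hγ : 0 < γ) (hγ' : ∀ i, (a i).re + γ / (d : ℝ) < 0)
    (𝓜mat Nmat : Matrix (Fin n) (Fin n) ℤ)
    (hnn : ∀ i j, 0 ≤ 𝓜mat i j)
    (hrow0 : ∀ j, 𝓜mat 0 j = (m j : ℤ))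
    (hblock : ∀ i j : Fin n, (n - mbar ≤ (i : ℕ) ∨ n - mbar ≤ (j : ℕ)) →
      𝓜mat i j = if i = j then 1 else 0)
    (hMN : 𝓜mat * Nmat = 1) (hNM : Nmat * 𝓜mat = 1)
    (φ : (Fin n → ℂ) → (Fin n → ℂ))
    (hφ : ∀ x, ∀ i : Fin n, φ x i = if i = 0 then (monom M x)⁻¹
      else gfun m (fun j => (𝓜mat i j).toNat) ((d : ℂ) * ∑ j, a j * (𝓜mat i j : ℂ)) x) :
    ∀ θ, 0 < θ → θ < Real.pi / 2 →
      ∃ ε₀ > 0, ∀ ε, 0 < ε → ε ≤ ε₀ →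
        InjOn φ (U0set M m d γ ε θ) ∧
        (∀ x ∈ U0set M m d γ ε θ, ∀ i : Fin n,
          x i = φ x 0 ^ a i *
            ∏ j ∈ Finset.univ.erase (0 : Fin n), φ x j ^ Nmat i j) ∧
        DifferentiableOn ℂ
          (fun y : Fin n → ℂ => fun i : Fin n =>
            y 0 ^ a i * ∏ j ∈ Finset.univ.erase (0 : Fin n), y j ^ Nmat i j)
          (φ '' U0set M m d γ ε θ) :=
  model_map_invertible_general M a hnorm d m hm mbar horder γ 𝓜mat Nmat hnn hrow0 hblock hNM φ hφ
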